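/- In the down-up algebra A(r+s, -rs), the elements x = du - r·ud and y = ud - s·du commute: xy = yx. -/

import Mathlib

noncomputable section

/-- The defining relations of the down-up algebra `A(r+s, -rs)`:
`d²u = (r+s)·dud - rs·ud²` and `du² = (r+s)·udu - rs·u²d`,
where `d` is the generator indexed by `0` and `u` the one indexed by `1`. -/
inductive DownUpRel (K : Type) [CommRing K] (r s : K) :
    FreeAlgebra K (Fin 2) → FreeAlgebra K (Fin 2) → Prop
  | rel1 : DownUpRel K r s
      (FreeAlgebra.ι K 0 * FreeAlgebra.ι K 0 * FreeAlgebra.ι K 1)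
      ((r + s) • (FreeAlgebra.ι K 0 * FreeAlgebra.ι K 1 * FreeAlgebra.ι K 0)
        - (r * s) • (FreeAlgebra.ι K 1 * FreeAlgebra.ι K 0 * FreeAlgebra.ι K 0))
  | rel2 : DownUpRel K r s
      (FreeAlgebra.ι K 0 * FreeAlgebra.ι K 1 * FreeAlgebra.ι K 1)
      ((r + s) • (FreeAlgebra.ι K 1 * FreeAlgebra.ι K 0 * FreeAlgebra.ι K 1)
        - (r * s) • (FreeAlgebra.ι K 1 * FreeAlgebra.ι K 1 * FreeAlgebra.ι K 0))

/-- The down-up algebra `A(r+s, -rs)`. -/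
abbrev DownUp (K : Type) [CommRing K] (r s : K) : Type := RingQuot (DownUpRel K r s)

/-- The generator `d` of the down-up algebra. -/
def DownUp.d (K : Type) [CommRing K] (r s : K) : DownUp K r s :=
  RingQuot.mkAlgHom K (DownUpRel K r s) (FreeAlgebra.ι K 0)

/-- The generator `u` of the down-up algebra. -/
def DownUp.u (K : Type) [CommRing K] (r s : K) : DownUp K r s :=
  RingQuot.mkAlgHom K (DownUpRel K r s) (FreeAlgebra.ι K 1)

/-- The element `x = du - r·ud`. -/
def DownUp.x (K : Type) [CommRing K] (r s : K) : DownUp K r s :=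
  DownUp.d K r s * DownUp.u K r s - r • (DownUp.u K r s * DownUp.d K r s)

/-- The element `y = ud - s·du`. -/
def DownUp.y (K : Type) [CommRing K] (r s : K) : DownUp K r s :=
  DownUp.u K r s * DownUp.d K r s - s • (DownUp.d K r s * DownUp.u K r s)

/-! Multiplying the first relation by `u` on the left and the second by `d` on the right gives the
same right-hand side `(r+s)·udud - rs·uudd`, hence `du·ud = ud·du`. Expanding,
`xy - yx = (1 - rs)(du·ud - ud·du)`, which therefore vanishes. -/

theorem commute_mul_sub_smul_mul_swap {R A : Type*} [CommRing R] [Ring A] [Algebra R A]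
    {a b : A} (h : a * b * b * a = b * a * a * b) (r s : R) :
    Commute (a * b - r • (b * a)) (b * a - s • (a * b)) := by
  have h' : a * b * (b * a) = b * a * (a * b) := by simpa only [← mul_assoc] using h
  simp only [Commute, SemiconjBy, mul_sub, sub_mul, smul_mul_assoc, mul_smul_comm, h']
  module

namespace DownUp

variable {K : Type} [CommRing K] {r s : K}

theorem d_mul_d_mul_u :
    d K r s * d K r s * u K r s =
      (r + s) • (d K r s * u K r s * d K r s) - (r * s) • (u K r s * d K r s * d K r s) := by
  simpa only [d, u, map_mul, map_sub, map_smul] using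
    RingQuot.mkAlgHom_rel K (DownUpRel.rel1 (r := r) (s := s))

theorem d_mul_u_mul_u :
    d K r s * u K r s * u K r s =
      (r + s) • (u K r s * d K r s * u K r s) - (r * s) • (u K r s * u K r s * d K r s) := by
  simpa only [d, u, map_mul, map_sub, map_smul] using
    RingQuot.mkAlgHom_rel K (DownUpRel.rel2 (r := r) (s := s))

theorem d_mul_u_mul_u_mul_d :
    d K r s * u K r s * u K r s * d K r s = u K r s * d K r s * d K r s * u K r s := by
  calc d K r s * u K r s * u K r s * d K r s
      = (r + s) • (u K r s * d K r s * u K r s * d K r s)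
          - (r * s) • (u K r s * u K r s * d K r s * d K r s) := by
        rw [d_mul_u_mul_u, sub_mul, smul_mul_assoc, smul_mul_assoc]
    _ = u K r s * (d K r s * d K r s * u K r s) := by
        rw [d_mul_d_mul_u, mul_sub, mul_smul_comm, mul_smul_comm]
        simp only [mul_assoc]
    _ = u K r s * d K r s * d K r s * u K r s := by simp only [mul_assoc]

end DownUp

theorem stmt3_general (K : Type) [Field K] (r s : K) :
    DownUp.x K r s * DownUp.y K r s = DownUp.y K r s * DownUp.x K r s :=
  commute_mul_sub_smul_mul_swap DownUp.d_mul_u_mul_u_mul_d r s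

/-- In the down-up algebra `A(r+s,-rs)`, the elements `x = du - r·ud` and
`y = ud - s·du` commute: `xy = yx`. -/
theorem stmt3 (K : Type) [Field K] [CharZero K] (r s : K) (hrs : r * s ≠ 0) :
    DownUp.x K r s * DownUp.y K r s = DownUp.y K r s * DownUp.x K r s :=
  stmt3_general K r s
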